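/- Let X be a Delone set in ℝ^d with parameters (r,R). Then the additive subgroup of ℝ^d generated by X − X is generated by the set {x − x' : x, x' ∈ X, ‖x − x'‖ ≤ 4R}. Consequently, if X moreover has finite type, then the additive subgroup generated by X (and the one generated by X − X) is a finitely generated group. -/
import Mathlib


open scoped Pointwise

noncomputable section

/-- `X` is uniformly discrete with parameter `r`: distinct points are at distance `≥ 2r`. -/
def UnifDiscrete {d : ℕ} (X : Set (EuclideanSpace ℝ (Fin d))) (r : ℝ) : Prop :=
  ∀ x ∈ X, ∀ y ∈ X, x ≠ y → 2 * r ≤ dist x y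

/-- `X` is relatively dense with parameter `R`: every closed ball of radius `R` meets `X`. -/
def RelDense {d : ℕ} (X : Set (EuclideanSpace ℝ (Fin d))) (R : ℝ) : Prop :=
  ∀ z : EuclideanSpace ℝ (Fin d), ∃ x ∈ X, dist z x ≤ R

lemma delone_chain {d : ℕ} (X : Set (EuclideanSpace ℝ (Fin d))) (R : ℝ)
    (hR : 0 < R) (hrd : RelDense X R) :
    ∀ n : ℕ, ∀ x ∈ X, ∀ x' ∈ X, ‖x - x'‖ ≤ R * n →
      x - x' ∈ AddSubgroup.closure
        {v | ∃ x ∈ X, ∃ x' ∈ X, v = x - x' ∧ ‖x - x'‖ ≤ 4 * R} := by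
  intro n
  induction n with
  | zero =>
    intro x hx x' hx' h
    have h0 : x - x' = 0 := by
      have := norm_nonneg (x - x')
      have : ‖x - x'‖ = 0 := by push_cast at h; linarith
      exact norm_eq_zero.mp this
    rw [h0]; exact zero_mem _
  | succ n ih =>
    intro x hx x' hx' h
    by_cases h4 : ‖x - x'‖ ≤ 4 * R
    · exact AddSubgroup.subset_closure ⟨x, hx, x', hx', rfl, h4⟩
    push_neg at h4
    have hv : 2 * R ≤ ‖x - x'‖ := by linarith
    have hvpos : (0:ℝ) < ‖x - x'‖ := by linarith
    set c : ℝ := 2 * R / ‖x - x'‖ with hc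
    have hc0 : 0 ≤ c := by positivity
    have hc1 : c ≤ 1 := by
      rw [hc, div_le_one hvpos]; linarith
    set z := x - c • (x - x') with hz
    obtain ⟨y, hy, hzy⟩ := hrd z
    have hzy' : ‖z - y‖ ≤ R := by rwa [← dist_eq_norm]
    have hcv : ‖c • (x - x')‖ = 2 * R := by
      rw [norm_smul, Real.norm_eq_abs, abs_of_nonneg hc0, hc,
        div_mul_cancel₀ _ (ne_of_gt hvpos)]
    have hxz : ‖x - z‖ = 2 * R := by
      rw [hz]
      have : x - (x - c • (x - x')) = c • (x - x') := by abel
      rw [this, hcv]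
    have hzx' : ‖z - x'‖ = ‖x - x'‖ - 2 * R := by
      have e : z - x' = (1 - c) • (x - x') := by
        rw [hz, sub_smul, one_smul]; abel
      rw [e, norm_smul, Real.norm_eq_abs, abs_of_nonneg (by linarith), hc,
        sub_mul, one_mul, div_mul_cancel₀ _ (ne_of_gt hvpos)]
    have hxy : ‖x - y‖ ≤ 4 * R := by
      have : x - y = (x - z) + (z - y) := by abel
      calc ‖x - y‖ = ‖(x - z) + (z - y)‖ := by rw [← this]
        _ ≤ ‖x - z‖ + ‖z - y‖ := norm_add_le _ _
        _ ≤ 4 * R := by rw [hxz]; linarith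
    have hyx' : ‖y - x'‖ ≤ R * n := by
      have e : y - x' = (y - z) + (z - x') := by abel
      have h1 : ‖y - z‖ ≤ R := by rwa [norm_sub_rev]
      have h2 : ‖x - x'‖ ≤ R * (n + 1) := by push_cast at h; linarith
      calc ‖y - x'‖ = ‖(y - z) + (z - x')‖ := by rw [← e]
        _ ≤ ‖y - z‖ + ‖z - x'‖ := norm_add_le _ _
        _ ≤ R * n := by rw [hzx']; linarith
    have m1 : x - y ∈ AddSubgroup.closure
        {v | ∃ x ∈ X, ∃ x' ∈ X, v = x - x' ∧ ‖x - x'‖ ≤ 4 * R} :=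
      AddSubgroup.subset_closure ⟨x, hx, y, hy, rfl, hxy⟩
    have m2 := ih y hy x' hx' hyx'
    have e : x - x' = (x - y) + (y - x') := by abel
    rw [e]; exact add_mem m1 m2

/-- For a Delone set `X` with parameters `(r,R)`, the additive subgroup generated by `X − X`
is generated by the differences of length at most `4R`; consequently, if `X` has finite type,
then the subgroups generated by `X` and by `X − X` are finitely generated. -/
theorem delone_group_fg {d : ℕ} (X : Set (EuclideanSpace ℝ (Fin d))) (r R : ℝ)
    (hr : 0 < r) (hR : 0 < R) (hud : UnifDiscrete X r) (hrd : RelDense X R) :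
    AddSubgroup.closure (X - X) =
      AddSubgroup.closure {v | ∃ x ∈ X, ∃ x' ∈ X, v = x - x' ∧ ‖x - x'‖ ≤ 4 * R} ∧
    ((∀ T > 0, ((X - X) ∩ Metric.ball 0 T).Finite) →
      (AddSubgroup.closure X).FG ∧ (AddSubgroup.closure (X - X)).FG) := by
  set S : Set (EuclideanSpace ℝ (Fin d)) :=
    {v | ∃ x ∈ X, ∃ x' ∈ X, v = x - x' ∧ ‖x - x'‖ ≤ 4 * R} with hS
  have hSsub : S ⊆ X - X := by
    rintro v ⟨x, hx, x', hx', rfl, -⟩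
    exact Set.sub_mem_sub hx hx'
  have key : AddSubgroup.closure (X - X) = AddSubgroup.closure S := by
    apply le_antisymm
    · rw [AddSubgroup.closure_le]
      rintro v hv
      obtain ⟨x, hx, x', hx', rfl⟩ := Set.mem_sub.mp hv
      obtain ⟨n, hn⟩ := exists_nat_ge (‖x - x'‖ / R)
      have hn' : ‖x - x'‖ ≤ R * n := by
        rw [div_le_iff₀ hR] at hn; linarith
      exact delone_chain X R hR hrd n x hx x' hx' hn'
    · exact AddSubgroup.closure_mono hSsub
  refine ⟨key, fun hft => ?_⟩
  have hSfin : S.Finite := by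
    apply Set.Finite.subset (hft (4 * R + 1) (by linarith))
    rintro v hv
    obtain ⟨x, hx, x', hx', rfl, hle⟩ := hv
    exact ⟨Set.sub_mem_sub hx hx', by
      rw [Metric.mem_ball, dist_zero_right]; linarith⟩
  have hfg2 : (AddSubgroup.closure (X - X)).FG := by
    rw [AddSubgroup.fg_iff]
    exact ⟨S, key.symm, hSfin⟩
  refine ⟨?_, hfg2⟩
  obtain ⟨x0, hx0, -⟩ := hrd 0
  have hXeq : AddSubgroup.closure X = AddSubgroup.closure ({x0} ∪ S) := by
    apply le_antisymm
    · rw [AddSubgroup.closure_le]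
      intro x hx
      have h1 : x0 ∈ AddSubgroup.closure ({x0} ∪ S) :=
        AddSubgroup.subset_closure (Or.inl rfl)
      have h2 : x - x0 ∈ AddSubgroup.closure ({x0} ∪ S) := by
        have : x - x0 ∈ AddSubgroup.closure S := by
          rw [← key]
          exact AddSubgroup.subset_closure (Set.sub_mem_sub hx hx0)
        exact AddSubgroup.closure_mono Set.subset_union_right this
      have e : x = x0 + (x - x0) := by abel
      rw [e]; exact add_mem h1 h2
    · rw [AddSubgroup.closure_le]
      rintro v (hv | hv)
      · rw [Set.mem_singleton_iff] at hv
        rw [hv]; exact AddSubgroup.subset_closure hx0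
      · obtain ⟨x, hx, x', hx', rfl, -⟩ := hv
        exact sub_mem (AddSubgroup.subset_closure hx) (AddSubgroup.subset_closure hx')
  rw [AddSubgroup.fg_iff]
  exact ⟨{x0} ∪ S, hXeq.symm, (Set.finite_singleton x0).union hSfin⟩
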